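/- arXiv:2306.13427 — 2 statements merged into one kernel-verified Lean document; each statement's English description precedes it below -/
import Mathlib

section
/- Let M ∈ ℝ^{τ×τ} be symmetric positive definite, let V ∈ ℝ^{τ×q}, and let Δ ∈ ℝ^{q×q} be symmetric with ‖Δ‖ · ‖Vᵀ M⁻¹ V‖ < 1, where ‖·‖ denotes the spectral norm. Then the matrix M + V Δ Vᵀ is symmetric positive definite. -/
open Matrix
open scoped Matrix.Norms.L2Operator ComplexOrder MatrixOrder

/-! Write `M = S Sᴴ` with `S = √M` invertible and put `B = S⁻¹ V`. Then
`M + V Δ Vᴴ = S (1 + B Δ Bᴴ) Sᴴ` and `Bᴴ B = Vᴴ M⁻¹ V`, so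
`‖B Δ Bᴴ‖ ≤ ‖Δ‖ ‖B‖² = ‖Δ‖ ‖Vᴴ M⁻¹ V‖ < 1`. A Hermitian perturbation of the identity of norm
less than one is positive definite, and congruence by an invertible matrix preserves positive
definiteness. -/

namespace Matrix

variable {𝕜 m n : Type*} [RCLike 𝕜]

theorem norm_star_dotProduct_mulVec_le [Fintype m] [Fintype n] [DecidableEq n]
    (A : Matrix m n 𝕜) (y : m → 𝕜) (x : n → 𝕜) :
    ‖star y ⬝ᵥ (A *ᵥ x)‖ ≤ ‖A‖ * ‖WithLp.toLp 2 y‖ * ‖WithLp.toLp 2 x‖ := by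
  calc ‖star y ⬝ᵥ (A *ᵥ x)‖
      = ‖inner 𝕜 (WithLp.toLp 2 y) (WithLp.toLp 2 (A *ᵥ x))‖ := by
        rw [EuclideanSpace.inner_toLp_toLp, dotProduct_comm]
    _ ≤ ‖WithLp.toLp 2 y‖ * ‖WithLp.toLp 2 (A *ᵥ x)‖ := norm_inner_le_norm _ _
    _ ≤ ‖WithLp.toLp 2 y‖ * (‖A‖ * ‖WithLp.toLp 2 x‖) := by
        gcongr; exact A.l2_opNorm_mulVec (WithLp.toLp 2 x)
    _ = ‖A‖ * ‖WithLp.toLp 2 y‖ * ‖WithLp.toLp 2 x‖ := by ring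

theorem IsHermitian.posDef_one_add_of_norm_lt_one [Fintype n] [DecidableEq n]
    {A : Matrix n n 𝕜} (hA : A.IsHermitian) (h : ‖A‖ < 1) : (1 + A).PosDef := by
  refine .of_dotProduct_mulVec_pos (isHermitian_one.add hA) fun x hx => ?_
  have hxpos : 0 < ‖WithLp.toLp 2 x‖ := by simpa using hx
  have hself : star x ⬝ᵥ x = (‖WithLp.toLp 2 x‖ ^ 2 : ℝ) := by
    rw [dotProduct_comm, ← EuclideanSpace.inner_toLp_toLp, inner_self_eq_norm_sq_to_K,
      RCLike.ofReal_pow]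
  have hbound := A.norm_star_dotProduct_mulVec_le x x
  rw [add_mulVec, one_mulVec, dotProduct_add, RCLike.pos_iff, map_add, map_add, hself,
    RCLike.ofReal_re, RCLike.ofReal_im, hA.im_star_dotProduct_mulVec_self, add_zero]
  refine ⟨?_, rfl⟩
  nlinarith [mul_lt_mul_of_pos_right h (mul_pos hxpos hxpos),
    neg_le_of_abs_le (RCLike.abs_re_le_norm (star x ⬝ᵥ (A *ᵥ x)))]

theorem l2_opNorm_mul_mul_conjTranspose_le [Fintype m] [DecidableEq m] [Fintype n]
    [DecidableEq n] (B : Matrix m n 𝕜) (Δ : Matrix n n 𝕜) :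
    ‖B * Δ * Bᴴ‖ ≤ ‖Δ‖ * ‖Bᴴ * B‖ := by
  calc ‖B * Δ * Bᴴ‖ ≤ ‖B‖ * ‖Δ‖ * ‖Bᴴ‖ :=
        (l2_opNorm_mul _ _).trans (by gcongr; exact l2_opNorm_mul _ _)
    _ = ‖Δ‖ * ‖Bᴴ * B‖ := by
        rw [l2_opNorm_conjTranspose, l2_opNorm_conjTranspose_mul_self]; ring

theorem PosDef.exists_isUnit_mul_star_eq [Fintype n] [DecidableEq n] {M : Matrix n n 𝕜}
    (hM : M.PosDef) :
    ∃ S : Matrix n n 𝕜, IsUnit S ∧ S * star S = M := by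
  refine ⟨CFC.sqrt M, (CFC.isUnit_sqrt_iff M hM.posSemidef.nonneg).mpr hM.isUnit, ?_⟩
  rw [(CFC.sqrt_nonneg M).isSelfAdjoint.star_eq, CFC.sqrt_mul_sqrt_self M hM.posSemidef.nonneg]

theorem mul_star_add_mul_mul_conjTranspose_eq [Fintype m] [DecidableEq m] [Fintype n]
    {S : Matrix m m 𝕜} (hS : IsUnit S) (V : Matrix m n 𝕜) (Δ : Matrix n n 𝕜) :
    S * star S + V * Δ * Vᴴ = S * (1 + (S⁻¹ * V) * Δ * (S⁻¹ * V)ᴴ) * star S := by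
  have hSS : S * S⁻¹ = 1 := mul_nonsing_inv S ((isUnit_iff_isUnit_det S).mp hS)
  have hSS' : (S⁻¹)ᴴ * star S = 1 := by
    rw [star_eq_conjTranspose, ← conjTranspose_mul, hSS, conjTranspose_one]
  simp only [mul_add, add_mul, Matrix.mul_one, conjTranspose_mul, ← Matrix.mul_assoc, hSS,
    Matrix.one_mul]
  simp only [Matrix.mul_assoc, hSS', Matrix.mul_one]

theorem conjTranspose_inv_mul_mul_inv_mul [Fintype m] [DecidableEq m] (S : Matrix m m 𝕜)
    (V : Matrix m n 𝕜) :
    (S⁻¹ * V)ᴴ * (S⁻¹ * V) = Vᴴ * (S * star S)⁻¹ * V := by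
  rw [Matrix.mul_inv_rev, star_eq_conjTranspose, ← conjTranspose_nonsing_inv, conjTranspose_mul]
  simp only [Matrix.mul_assoc]

theorem PosDef.add_mul_mul_conjTranspose_of_norm_mul_lt_one [Fintype m] [DecidableEq m]
    [Fintype n] [DecidableEq n] {M : Matrix m m 𝕜} (hM : M.PosDef) {V : Matrix m n 𝕜}
    {Δ : Matrix n n 𝕜} (hΔ : Δ.IsHermitian)
    (h : ‖Δ‖ * ‖Vᴴ * M⁻¹ * V‖ < 1) : (M + V * Δ * Vᴴ).PosDef := by
  obtain ⟨S, hS, rfl⟩ := hM.exists_isUnit_mul_star_eq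
  rw [mul_star_add_mul_mul_conjTranspose_eq hS, hS.posDef_star_right_conjugate_iff]
  refine (isHermitian_mul_mul_conjTranspose _ hΔ).posDef_one_add_of_norm_lt_one ?_
  calc _ ≤ _ := l2_opNorm_mul_mul_conjTranspose_le _ Δ
    _ < 1 := by rwa [conjTranspose_inv_mul_mul_inv_mul]

end Matrix

/-- Let `M ∈ ℝ^{τ×τ}` be symmetric positive definite, `V ∈ ℝ^{τ×q}`, and
`Δ ∈ ℝ^{q×q}` symmetric with `‖Δ‖ ⬝ ‖Vᵀ M⁻¹ V‖ < 1` (spectral norms). Then `M + V Δ Vᵀ` is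
symmetric positive definite. -/
theorem posDef_add_small_structured_perturbation
    (τ q : ℕ)
    (M : Matrix (Fin τ) (Fin τ) ℝ) (V : Matrix (Fin τ) (Fin q) ℝ)
    (Δ : Matrix (Fin q) (Fin q) ℝ)
    (hM : M.PosDef) (hΔ : Δ.IsSymm)
    (hsmall : ‖Δ‖ * ‖Vᵀ * M⁻¹ * V‖ < 1) :
    (M + V * Δ * Vᵀ).PosDef := by
  rw [← conjTranspose_eq_transpose_of_trivial] at hsmall ⊢
  exact hM.add_mul_mul_conjTranspose_of_norm_mul_lt_one hΔ hsmall
end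

section
/- Let E = [E_T E_C] ∈ ℝ^{n×m} satisfy Eᵀ𝟙_n = 0, where E_T ∈ ℝ^{n×(n−1)} has rank n−1 and every column of E_C lies in the column space of E_T; let W = diag(w₁,…,w_m) with all w_k > 0, set T = (E_TᵀE_T)⁻¹E_TᵀE_C and R = [I_{n−1} T]. Let S ⊆ {1,…,m} be a nonempty set of q attacked edges, let P ∈ ℝ^{m×q} be the selection matrix whose columns are the distinct standard basis vectors of ℝ^m indexed by S, and let Δ ∈ ℝ^{q×q} be diagonal with ‖Δ‖ < ‖Pᵀ Rᵀ (R W Rᵀ)⁻¹ R P‖⁻¹. Then the perturbed Laplacian L_Δ = E (W + P Δ Pᵀ) Eᵀ is symmetric positive semidefinite and its kernel is exactly the span of 𝟙_n. -/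
/-!
Since the columns of `E_C` lie in the range of `E_T`, `E = E_T R`, hence
`L_Δ = E_T N E_Tᵀ` with `N = R (W + P Δ Pᵀ) Rᵀ = M + B Δ Bᵀ`, where `M = R W Rᵀ` and `B = R P`.
`M` is positive definite because `R` contains an identity block. Substituting `x ↦ M^{1/2} x` gives
`|Bᵀ x|² ≤ ‖Bᵀ M⁻¹ B‖ xᵀ M x`, so `|xᵀ B Δ Bᵀ x| ≤ ‖Δ‖ ‖Bᵀ M⁻¹ B‖ xᵀ M x < xᵀ M x` and `N` is
positive definite. Therefore `L_Δ` is positive semidefinite with kernel `ker E_Tᵀ`, which has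
dimension `1` by the rank of `E_T` and contains `𝟙` because `Eᵀ 𝟙 = 0`.
-/

open Matrix
open scoped Matrix.Norms.L2Operator

namespace Matrix

variable {K : Type*} {m n p : Type*}

lemma finrank_ker_mulVecLin [Field K] [Fintype n] (A : Matrix m n K) :
    Module.finrank K (LinearMap.ker A.mulVecLin) = Fintype.card n - A.rank := by
  have := LinearMap.finrank_range_add_finrank_ker A.mulVecLin
  rw [Module.finrank_fintype_fun_eq_card] at this
  rw [rank]
  omega

lemma mulVec_injective_of_rank_eq_card [Field K] [Fintype n] {A : Matrix m n K}
    (h : A.rank = Fintype.card n) : Function.Injective A.mulVec := by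
  rw [← coe_mulVecLin, ← LinearMap.ker_eq_bot, ← Submodule.finrank_eq_zero,
    finrank_ker_mulVecLin, h, Nat.sub_self]

lemma ker_mulVecLin_eq_span_singleton [Field K] [Fintype n] {A : Matrix m n K}
    (h : Fintype.card n - 1 ≤ A.rank) {v : n → K} (hv : v ≠ 0) (hAv : A *ᵥ v = 0) :
    LinearMap.ker A.mulVecLin = K ∙ v := by
  refine (Submodule.eq_of_le_of_finrank_le ?_ ?_).symm
  · rwa [Submodule.span_singleton_le_iff_mem, LinearMap.mem_ker, mulVecLin_apply]
  · rw [finrank_span_singleton hv, finrank_ker_mulVecLin]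
    omega

lemma vecMul_fromCols_one_injective [Semiring K] [Fintype n] [DecidableEq n] (T : Matrix n p K) :
    Function.Injective (fromCols (1 : Matrix n n K) T).vecMul := fun x y hxy => by
  simpa [vecMul_fromCols] using congrArg (· ∘ Sum.inl) hxy

lemma fromCols_eq_mul_fromCols_one [Fintype m] [Fintype n] [DecidableEq n] {A : Matrix m n ℝ}
    (hA : Function.Injective A.mulVec) {C : Matrix m p ℝ}
    (hC : ∀ j, ∃ x, A *ᵥ x = fun i => C i j) :
    fromCols A C = A * fromCols 1 ((Aᵀ * A)⁻¹ * Aᵀ * C) := by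
  choose X hX using hC
  have hCX : C = A * of fun i j => X j i := by
    ext i j
    simpa [mul_apply, mulVec, dotProduct] using (congrFun (hX j) i).symm
  have hAA : IsUnit (Aᵀ * A).det :=
    (isUnit_iff_isUnit_det _).1 (PosDef.conjTranspose_mul_self A hA).isUnit
  rw [hCX, Matrix.mul_assoc, ← Matrix.mul_assoc Aᵀ, ← Matrix.mul_assoc, nonsing_inv_mul _ hAA,
    Matrix.one_mul, mul_fromCols, Matrix.mul_one]

lemma dotProduct_mul_mul_transpose_mulVec [CommSemiring K] [Fintype m] [Fintype n]
    (B : Matrix m n K) (D : Matrix n n K) (x : m → K) :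
    x ⬝ᵥ ((B * D * Bᵀ) *ᵥ x) = (Bᵀ *ᵥ x) ⬝ᵥ (D *ᵥ (Bᵀ *ᵥ x)) := by
  rw [← mulVec_mulVec, ← mulVec_mulVec, dotProduct_mulVec, ← mulVec_transpose]

lemma PosDef.ker_mul_mul_transpose [Fintype m] [Fintype n] {N : Matrix n n ℝ} (hN : N.PosDef)
    (A : Matrix m n ℝ) :
    LinearMap.ker (A * N * Aᵀ).mulVecLin = LinearMap.ker Aᵀ.mulVecLin := by
  ext x
  simp only [LinearMap.mem_ker, mulVecLin_apply]
  refine ⟨fun hx => ?_, fun hx => by rw [← mulVec_mulVec, hx, mulVec_zero]⟩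
  by_contra hne
  have hpos := hN.dotProduct_mulVec_pos hne
  rw [star_trivial, ← dotProduct_mul_mul_transpose_mulVec, hx, dotProduct_zero] at hpos
  exact hpos.false

lemma dotProduct_self_eq_norm_sq [Fintype n] (v : n → ℝ) :
    v ⬝ᵥ v = ‖WithLp.toLp 2 v‖ ^ 2 := by
  rw [← real_inner_self_eq_norm_sq, EuclideanSpace.inner_toLp_toLp, star_trivial]

lemma mulVec_dotProduct_self_le [Fintype m] [Fintype n] [DecidableEq n] (A : Matrix m n ℝ)
    (x : n → ℝ) : (A *ᵥ x) ⬝ᵥ (A *ᵥ x) ≤ ‖A‖ ^ 2 * (x ⬝ᵥ x) := by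
  rw [dotProduct_self_eq_norm_sq, dotProduct_self_eq_norm_sq, ← mul_pow]
  gcongr
  exact A.l2_opNorm_mulVec (WithLp.toLp 2 x)

lemma abs_dotProduct_mulVec_le [Fintype n] [DecidableEq n] (A : Matrix n n ℝ) (x : n → ℝ) :
    |x ⬝ᵥ (A *ᵥ x)| ≤ ‖A‖ * (x ⬝ᵥ x) := by
  calc |x ⬝ᵥ (A *ᵥ x)| = |inner ℝ (WithLp.toLp 2 (A *ᵥ x)) (WithLp.toLp 2 x)| := by
        rw [EuclideanSpace.inner_toLp_toLp, star_trivial]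
    _ ≤ ‖WithLp.toLp 2 (A *ᵥ x)‖ * ‖WithLp.toLp 2 x‖ := abs_real_inner_le_norm _ _
    _ ≤ ‖A‖ * ‖WithLp.toLp 2 x‖ * ‖WithLp.toLp 2 x‖ := by
        gcongr
        exact A.l2_opNorm_mulVec (WithLp.toLp 2 x)
    _ = ‖A‖ * (x ⬝ᵥ x) := by rw [dotProduct_self_eq_norm_sq]; ring

open scoped MatrixOrder in
lemma PosDef.transpose_mulVec_dotProduct_self_le [Fintype n] [Fintype p] [DecidableEq n]
    [DecidableEq p] {M : Matrix n n ℝ} (hM : M.PosDef) (B : Matrix n p ℝ) (x : n → ℝ) :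
    (Bᵀ *ᵥ x) ⬝ᵥ (Bᵀ *ᵥ x) ≤ ‖Bᵀ * M⁻¹ * B‖ * (x ⬝ᵥ (M *ᵥ x)) := by
  set S := CFC.sqrt M
  have hS : Sᵀ = S := by
    rw [← conjTranspose_eq_transpose_of_trivial]
    exact (CFC.sqrt_nonneg M).posSemidef.isHermitian
  have hSS : S * S = M := CFC.sqrt_mul_sqrt_self M hM.posSemidef.nonneg
  have hSunit : IsUnit S := (CFC.isUnit_sqrt_iff M hM.posSemidef.nonneg).2 hM.isUnit
  have hB : Bᵀ = (S⁻¹ * B)ᵀ * S := by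
    rw [transpose_mul, transpose_nonsing_inv, hS, Matrix.mul_assoc,
      nonsing_inv_mul _ ((isUnit_iff_isUnit_det S).1 hSunit), Matrix.mul_one]
  have hBMB : (S⁻¹ * B)ᵀ * (S⁻¹ * B) = Bᵀ * M⁻¹ * B := by
    rw [transpose_mul, transpose_nonsing_inv, hS, ← hSS, Matrix.mul_inv_rev]
    simp only [Matrix.mul_assoc]
  have hSx : (S *ᵥ x) ⬝ᵥ (S *ᵥ x) = x ⬝ᵥ (M *ᵥ x) := by
    rw [dotProduct_mulVec, ← mulVec_transpose, hS, mulVec_mulVec, hSS, dotProduct_comm]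
  calc (Bᵀ *ᵥ x) ⬝ᵥ (Bᵀ *ᵥ x)
      = ((S⁻¹ * B)ᵀ *ᵥ (S *ᵥ x)) ⬝ᵥ ((S⁻¹ * B)ᵀ *ᵥ (S *ᵥ x)) := by rw [hB, mulVec_mulVec]
    _ ≤ ‖(S⁻¹ * B)ᵀ‖ ^ 2 * ((S *ᵥ x) ⬝ᵥ (S *ᵥ x)) := mulVec_dotProduct_self_le _ _
    _ = ‖Bᵀ * M⁻¹ * B‖ * (x ⬝ᵥ (M *ᵥ x)) := by
        rw [hSx, ← hBMB, ← conjTranspose_eq_transpose_of_trivial, l2_opNorm_conjTranspose,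
          l2_opNorm_conjTranspose_mul_self, sq]

lemma PosDef.add_mul_mul_transpose [Fintype n] [Fintype p] [DecidableEq n] [DecidableEq p]
    {M : Matrix n n ℝ} (hM : M.PosDef) {D : Matrix p p ℝ} (hD : D.IsHermitian)
    (B : Matrix n p ℝ) (hsmall : ‖D‖ < ‖Bᵀ * M⁻¹ * B‖⁻¹) :
    (M + B * D * Bᵀ).PosDef := by
  have hDK : ‖D‖ * ‖Bᵀ * M⁻¹ * B‖ < 1 := by
    rcases (norm_nonneg (Bᵀ * M⁻¹ * B)).eq_or_lt with hK | hK
    · simp [← hK]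
    · calc ‖D‖ * ‖Bᵀ * M⁻¹ * B‖ < ‖Bᵀ * M⁻¹ * B‖⁻¹ * ‖Bᵀ * M⁻¹ * B‖ := by gcongr
        _ = 1 := inv_mul_cancel₀ hK.ne'
  have hBDB : (B * D * Bᵀ).IsHermitian := by
    simpa using isHermitian_mul_mul_conjTranspose B hD
  refine PosDef.of_dotProduct_mulVec_pos (hM.isHermitian.add hBDB) fun x hx => ?_
  have hMx : 0 < x ⬝ᵥ (M *ᵥ x) := by simpa using hM.dotProduct_mulVec_pos hx
  have hD_le := abs_dotProduct_mulVec_le D (Bᵀ *ᵥ x)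
  have hB_le := hM.transpose_mulVec_dotProduct_self_le B x
  rw [star_trivial, add_mulVec, dotProduct_add, dotProduct_mul_mul_transpose_mulVec]
  calc 0 < (1 - ‖D‖ * ‖Bᵀ * M⁻¹ * B‖) * (x ⬝ᵥ (M *ᵥ x)) := mul_pos (sub_pos.2 hDK) hMx
    _ ≤ x ⬝ᵥ (M *ᵥ x) - ‖D‖ * ((Bᵀ *ᵥ x) ⬝ᵥ (Bᵀ *ᵥ x)) := by
        linarith [mul_le_mul_of_nonneg_left hB_le (norm_nonneg D)]
    _ ≤ _ := by linarith [neg_abs_le ((Bᵀ *ᵥ x) ⬝ᵥ (D *ᵥ (Bᵀ *ᵥ x)))]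

end Matrix

theorem perturbed_laplacian_posSemidef_ker_span_ones_general
    (n c q : ℕ) (hn : 2 ≤ n)
    (ET : Matrix (Fin n) (Fin (n - 1)) ℝ) (EC : Matrix (Fin n) (Fin c) ℝ)
    (E : Matrix (Fin n) (Fin (n - 1) ⊕ Fin c) ℝ)
    (hE : E = Matrix.fromCols ET EC)
    (hE1 : Eᵀ *ᵥ (fun _ => (1 : ℝ)) = 0)
    (hrankT : ET.rank = n - 1)
    (hcol : ∀ j : Fin c, ∃ x : Fin (n - 1) → ℝ, ET *ᵥ x = fun i => EC i j)
    (w : Fin (n - 1) ⊕ Fin c → ℝ) (hw : ∀ k, 0 < w k)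
    (R : Matrix (Fin (n - 1)) (Fin (n - 1) ⊕ Fin c) ℝ)
    (hR : R = Matrix.fromCols (1 : Matrix (Fin (n - 1)) (Fin (n - 1)) ℝ)
      ((ETᵀ * ET)⁻¹ * ETᵀ * EC))
    (P : Matrix (Fin (n - 1) ⊕ Fin c) (Fin q) ℝ)
    (d : Fin q → ℝ)
    (hsmall : ‖Matrix.diagonal d‖ <
      ‖Pᵀ * Rᵀ * (R * Matrix.diagonal w * Rᵀ)⁻¹ * R * P‖⁻¹)
    (LΔ : Matrix (Fin n) (Fin n) ℝ)
    (hLΔ : LΔ = E * (Matrix.diagonal w + P * Matrix.diagonal d * Pᵀ) * Eᵀ) :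
    LΔ.PosSemidef ∧
      LinearMap.ker LΔ.mulVecLin =
        Submodule.span ℝ {(fun _ => (1 : ℝ) : Fin n → ℝ)} := by
  have hET : Function.Injective ET.mulVec :=
    mulVec_injective_of_rank_eq_card (by simpa using hrankT)
  have hER : E = ET * R := hE ▸ hR ▸ fromCols_eq_mul_fromCols_one hET hcol
  have hM : (R * diagonal w * Rᵀ).PosDef := by
    simpa using (posDef_diagonal_iff.2 hw).mul_mul_conjTranspose_same
      (hR ▸ vecMul_fromCols_one_injective _)
  have hN : (R * (diagonal w + P * diagonal d * Pᵀ) * Rᵀ).PosDef := by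
    have hsplit : R * (diagonal w + P * diagonal d * Pᵀ) * Rᵀ
        = R * diagonal w * Rᵀ + (R * P) * diagonal d * (R * P)ᵀ := by
      simp only [Matrix.mul_add, Matrix.add_mul, transpose_mul, Matrix.mul_assoc]
    rw [hsplit]
    exact hM.add_mul_mul_transpose (isHermitian_diagonal d) _
      (by simpa only [transpose_mul, Matrix.mul_assoc] using hsmall)
  have hL : LΔ = ET * (R * (diagonal w + P * diagonal d * Pᵀ) * Rᵀ) * ETᵀ := by
    rw [hLΔ, hER, transpose_mul]
    simp only [Matrix.mul_assoc]
  have hones : ETᵀ *ᵥ (fun _ => (1 : ℝ)) = 0 := by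
    rw [hE, transpose_fromCols, fromRows_mulVec] at hE1
    simpa using congrArg (· ∘ Sum.inl) hE1
  have : NeZero n := ⟨by omega⟩
  refine ⟨by simpa [← hL] using hN.posSemidef.mul_mul_conjTranspose_same ET, ?_⟩
  rw [hL, hN.ker_mul_mul_transpose]
  exact ker_mulVecLin_eq_span_singleton (by simp [hrankT]) one_ne_zero hones

/-- Robust stability of the perturbed Laplacian under multi-edge attacks:
if `E = [E_T E_C]` with `Eᵀ𝟙 = 0`, `E_T` of full column rank `n−1`, the columns of `E_C` in the
column space of `E_T`, `W = diag(w)` with positive weights, `R = [I (E_TᵀE_T)⁻¹E_TᵀE_C]` the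
cut-set matrix, `P` the selection matrix of a nonempty attacked-edge set, and `Δ = diag(d)` with
`‖Δ‖ < ‖Pᵀ Rᵀ (R W Rᵀ)⁻¹ R P‖⁻¹` (spectral norms), then
`L_Δ = E (W + P Δ Pᵀ) Eᵀ` is symmetric positive semidefinite with kernel exactly `span{𝟙}`. -/
theorem perturbed_laplacian_posSemidef_ker_span_ones
    (n c q : ℕ) (hn : 2 ≤ n) (hq : 0 < q)
    (ET : Matrix (Fin n) (Fin (n - 1)) ℝ) (EC : Matrix (Fin n) (Fin c) ℝ)
    (E : Matrix (Fin n) (Fin (n - 1) ⊕ Fin c) ℝ)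
    (hE : E = Matrix.fromCols ET EC)
    (hE1 : Eᵀ *ᵥ (fun _ => (1 : ℝ)) = 0)
    (hrankT : ET.rank = n - 1)
    (hcol : ∀ j : Fin c, ∃ x : Fin (n - 1) → ℝ, ET *ᵥ x = fun i => EC i j)
    (w : Fin (n - 1) ⊕ Fin c → ℝ) (hw : ∀ k, 0 < w k)
    (R : Matrix (Fin (n - 1)) (Fin (n - 1) ⊕ Fin c) ℝ)
    (hR : R = Matrix.fromCols (1 : Matrix (Fin (n - 1)) (Fin (n - 1)) ℝ)
      ((ETᵀ * ET)⁻¹ * ETᵀ * EC))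
    (s : Fin q → Fin (n - 1) ⊕ Fin c) (hs : Function.Injective s)
    (P : Matrix (Fin (n - 1) ⊕ Fin c) (Fin q) ℝ)
    (hP : P = Matrix.of fun i j => if i = s j then (1 : ℝ) else 0)
    (d : Fin q → ℝ)
    (hsmall : ‖Matrix.diagonal d‖ <
      ‖Pᵀ * Rᵀ * (R * Matrix.diagonal w * Rᵀ)⁻¹ * R * P‖⁻¹)
    (LΔ : Matrix (Fin n) (Fin n) ℝ)
    (hLΔ : LΔ = E * (Matrix.diagonal w + P * Matrix.diagonal d * Pᵀ) * Eᵀ) :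
    LΔ.PosSemidef ∧
      LinearMap.ker LΔ.mulVecLin =
        Submodule.span ℝ {(fun _ => (1 : ℝ) : Fin n → ℝ)} :=
  perturbed_laplacian_posSemidef_ker_span_ones_general n c q hn ET EC E hE hE1 hrankT hcol w hw R hR
    P d hsmall LΔ hLΔ
end
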